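/- arXiv:1712.05104 — 3 statements merged into one kernel-verified Lean document; each statement's English description precedes it below -/
import Mathlib

section
/- Let m, n ∈ ℕ, m, n ≥ 1, and let F : ℝⁿ → ℂ^{m×m} be bounded and continuous with every entry function F_{j,k} : ℝⁿ → ℂ, 1 ≤ j,k ≤ m, positive semidefinite. Then for every t ≥ 0 and all 1 ≤ j,k ≤ m, the function x ↦ (exp(t F(x)))_{j,k}, where exp denotes the matrix exponential, is positive semidefinite. -/
open MeasureTheory Complex
open scoped ComplexOrder ENNReal

noncomputable section

/-- A function `F : ℝⁿ → ℂ` is positive semidefinite if for every `N ∈ ℕ` and all points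
`x₁, …, x_N ∈ ℝⁿ`, the `N × N` complex matrix `(F (x p - x q))_{p,q}` is positive
semidefinite. -/
def IsPosSemidefFun {n : ℕ} (F : (Fin n → ℝ) → ℂ) : Prop :=
  ∀ (N : ℕ) (x : Fin N → (Fin n → ℝ)),
    Matrix.PosSemidef (Matrix.of fun p q => F (x p - x q))

/-- A function `F : ℝⁿ → ℂ` is conditionally positive semidefinite if for every `N ∈ ℕ` and
all points `x₁, …, x_N ∈ ℝⁿ`, the matrix `(F (x p - x q))_{p,q}` is Hermitian and
`∑ p q, conj (c p) * F (x p - x q) * c q ≥ 0` for all `c : ℂᴺ` with `∑ p, c p = 0`. -/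
def IsCondPosSemidefFun {n : ℕ} (F : (Fin n → ℝ) → ℂ) : Prop :=
  ∀ (N : ℕ) (x : Fin N → (Fin n → ℝ)),
    (Matrix.of fun p q => F (x p - x q)).IsHermitian ∧
      ∀ c : Fin N → ℂ, (∑ p, c p) = 0 →
        0 ≤ ∑ p, ∑ q, (starRingEnd ℂ) (c p) * F (x p - x q) * c q

/-- The Fourier transform `f^∧(y) = (2π)^{-n/2} ∫_{ℝⁿ} e^{-i y·x} f(x) dⁿx`. -/
def fourierT {n : ℕ} (f : (Fin n → ℝ) → ℂ) (y : Fin n → ℝ) : ℂ :=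
  (((2 * Real.pi) ^ (-(n : ℝ) / 2) : ℝ) : ℂ) *
    ∫ x : Fin n → ℝ, Complex.exp (-Complex.I * (∑ i, y i * x i)) * f x

/-!
The positive semidefinite functions form a subsemiring of the pointwise ring of functions
`ℝⁿ → ℂ`: products are positive semidefinite by the Schur product theorem, since the matrix of
`f * g` is the Hadamard product of those of `f` and `g`. Hence every entry of `F x ^ ℓ`, a
polynomial in the entries of `F x`, is positive semidefinite. The entries of `exp (t F x)` are
pointwise convergent series of these with coefficients `t ^ ℓ / ℓ!` ≥ 0, and positive
semidefinite matrices form a closed cone.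
-/

namespace Matrix

section PosSemidef

variable {ι R : Type*} [Ring R] [PartialOrder R] [StarRing R] [TopologicalSpace R]
  [IsTopologicalRing R] [ContinuousStar R] [OrderClosedTopology R]

theorem isClosed_setOf_posSemidef : IsClosed {A : Matrix ι ι R | A.PosSemidef} := by
  simp only [PosSemidef, IsHermitian, Set.ofPred_and, Set.ofPred_forall]
  refine (isClosed_eq (by fun_prop) continuous_id).inter (isClosed_iInter fun x => ?_)
  exact isClosed_le continuous_const (by unfold Finsupp.sum; fun_prop)

theorem PosSemidef.of_hasSum [AddLeftMono R] {κ : Type*} {f : κ → Matrix ι ι R}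
    {A : Matrix ι ι R} (hf : HasSum f A) (h : ∀ i, (f i).PosSemidef) : A.PosSemidef :=
  isClosed_setOf_posSemidef.mem_of_tendsto hf
    (Filter.Eventually.of_forall fun s => posSemidef_sum s fun i _ => h i)

end PosSemidef

variable {m : Type*} [Fintype m] [DecidableEq m]

theorem pow_apply_mem {R : Type*} [Semiring R] (S : Subsemiring R) {A : Matrix m m R}
    (hA : ∀ i j, A i j ∈ S) (ℓ : ℕ) (i j : m) : (A ^ ℓ) i j ∈ S := by
  let B : Matrix m m S := of fun i j => ⟨A i j, hA i j⟩
  have hB : A = S.subtype.mapMatrix B := rfl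
  rw [hB, ← map_pow]
  exact ((B ^ ℓ) i j).2

open scoped Norms.Operator in
theorem hasSum_exp_apply {𝕂 : Type*} [RCLike 𝕂] (A : Matrix m m 𝕂) (i j : m) :
    HasSum (fun ℓ : ℕ => (ℓ.factorial : 𝕂)⁻¹ * (A ^ ℓ) i j) (NormedSpace.exp A i j) :=
  Pi.hasSum.mp (Pi.hasSum.mp (NormedSpace.exp_series_hasSum_exp' (𝕂 := 𝕂) A) i) j

end Matrix

theorem isPosSemidefFun_zero {n : ℕ} : IsPosSemidefFun (0 : (Fin n → ℝ) → ℂ) :=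
  fun _ _ => Matrix.PosSemidef.zero

theorem isPosSemidefFun_one {n : ℕ} : IsPosSemidefFun (1 : (Fin n → ℝ) → ℂ) := fun N _ => by
  simpa [Matrix.vecMulVec] using Matrix.posSemidef_vecMulVec_self_star (1 : Fin N → ℂ)

namespace IsPosSemidefFun

variable {n : ℕ} {f g : (Fin n → ℝ) → ℂ}

theorem add (hf : IsPosSemidefFun f) (hg : IsPosSemidefFun g) : IsPosSemidefFun (f + g) :=
  fun N x => (hf N x).add (hg N x)

theorem mul (hf : IsPosSemidefFun f) (hg : IsPosSemidefFun g) : IsPosSemidefFun (f * g) :=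
  fun N x => (hf N x).hadamard (hg N x)

theorem const_mul (hf : IsPosSemidefFun f) {c : ℂ} (hc : 0 ≤ c) :
    IsPosSemidefFun fun x => c * f x :=
  fun N x => (hf N x).smul hc

theorem of_hasSum {κ : Type*} {f : κ → (Fin n → ℝ) → ℂ} (hf : ∀ i, IsPosSemidefFun (f i))
    (hg : ∀ x, HasSum (fun i => f i x) (g x)) : IsPosSemidefFun g := fun N x =>
  Matrix.PosSemidef.of_hasSum (Pi.hasSum.mpr fun _ => Pi.hasSum.mpr fun _ => hg _)
    fun i => hf i N x

end IsPosSemidefFun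

def posSemidefFunSubsemiring (n : ℕ) : Subsemiring ((Fin n → ℝ) → ℂ) where
  carrier := {f | IsPosSemidefFun f}
  mul_mem' := IsPosSemidefFun.mul
  one_mem' := isPosSemidefFun_one
  add_mem' := IsPosSemidefFun.add
  zero_mem' := isPosSemidefFun_zero

section MatrixValued

variable {m : Type*} [Fintype m] [DecidableEq m] {n : ℕ}

theorem isPosSemidefFun_pow_apply (F : (Fin n → ℝ) → Matrix m m ℂ)
    (hF : ∀ j k, IsPosSemidefFun fun x => F x j k) (ℓ : ℕ) (j k : m) :
    IsPosSemidefFun fun x => (F x ^ ℓ) j k := by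
  let G : Matrix m m ((Fin n → ℝ) → ℂ) := Matrix.of fun j k x => F x j k
  have hG : ∀ x, F x = (Pi.evalRingHom _ x).mapMatrix G := fun _ => rfl
  have hpow : (fun x => (F x ^ ℓ) j k) = (G ^ ℓ) j k := by
    funext x
    rw [hG, ← map_pow]
    rfl
  rw [hpow]
  exact Matrix.pow_apply_mem (posSemidefFunSubsemiring n) hF ℓ j k

theorem isPosSemidefFun_exp_apply (F : (Fin n → ℝ) → Matrix m m ℂ)
    (hF : ∀ j k, IsPosSemidefFun fun x => F x j k) (j k : m) :
    IsPosSemidefFun fun x => NormedSpace.exp (F x) j k :=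
  IsPosSemidefFun.of_hasSum
    (fun ℓ => (isPosSemidefFun_pow_apply F hF ℓ j k).const_mul
      (inv_nonneg.mpr (Nat.cast_nonneg _)))
    fun x => (F x).hasSum_exp_apply j k

end MatrixValued

theorem stmt11_general {m n : ℕ}
    (F : (Fin n → ℝ) → Matrix (Fin m) (Fin m) ℂ)
    (hpsd : ∀ j k, IsPosSemidefFun fun x => F x j k) :
    ∀ t : ℝ, 0 ≤ t → ∀ j k : Fin m,
      IsPosSemidefFun fun x => (NormedSpace.exp ((t : ℂ) • F x)) j k := by
  intro t ht
  exact isPosSemidefFun_exp_apply (fun x => (t : ℂ) • F x)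
    fun j k => (hpsd j k).const_mul (Complex.zero_le_real.mpr ht)

theorem stmt11 {m n : ℕ} (hm : 1 ≤ m) (hn : 1 ≤ n)
    (F : (Fin n → ℝ) → Matrix (Fin m) (Fin m) ℂ)
    (hFbd : ∃ C : ℝ, ∀ x j k, ‖F x j k‖ ≤ C)
    (hFcont : ∀ j k, Continuous fun x => F x j k)
    (hpsd : ∀ j k, IsPosSemidefFun fun x => F x j k) :
    ∀ t : ℝ, 0 ≤ t → ∀ j k : Fin m,
      IsPosSemidefFun fun x => (NormedSpace.exp ((t : ℂ) • F x)) j k :=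
  stmt11_general F hpsd
end
end

section
/- Let n ∈ ℕ, n ≥ 1, let a : ℝⁿ → ℝ be continuous and bounded above, let b ≥ 0 be a constant, and define F₀ : ℝⁿ → ℂ^{2×2} by F₀(x) = [[a(x), b],[b, a(x)]]. If a is conditionally positive semidefinite, then for every t > 0 the matrix-valued function x ↦ exp(t F₀(x)) (matrix exponential) is positive semidefinite in the block sense: for all N ∈ ℕ, all x₁,…,x_N ∈ ℝⁿ, and all c₁,…,c_N ∈ ℂ², one has Σ_{p,q=1}^N ⟨c_p, exp(t F₀(x_p − x_q)) c_q⟩_{ℂ²} ≥ 0. -/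
open MeasureTheory Complex
open scoped ComplexOrder ENNReal

noncomputable section

/-!
Schoenberg's argument. If `F` is conditionally positive semidefinite, the matrix
`F(x_p - x_q) - F(x_p) - F(-x_q) + F(0)` is positive semidefinite: it is the conditional form at
the points `0, x₁, …, x_N` tested on the sum-zero vectors `(-∑ c, c)`. By the Schur product
theorem its entrywise powers, hence its entrywise exponential, are positive semidefinite, and
`exp F(x_p - x_q)` differs from that exponential by a diagonal congruence. Finally
`t F₀(x) = t a(x) • 1 + t b J` with `J` Hermitian, so `exp (t F₀(x)) = exp (t a(x)) • exp (t b J)`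
and the block matrix is the Kronecker product of two positive semidefinite matrices.
-/

open scoped Kronecker

namespace Matrix

variable {𝕜 ι κ : Type*} [RCLike 𝕜] [Fintype ι] [Fintype κ]

lemma PosSemidef.map_pow {B : Matrix ι ι 𝕜} (hB : B.PosSemidef) (k : ℕ) :
    (B.map (· ^ k)).PosSemidef := by
  induction k with
  | zero =>
    convert posSemidef_vecMulVec_self_star (fun _ : ι => (1 : 𝕜)) using 1
    ext i j
    simp [vecMulVec]
  | succ k ih =>
    convert hB.hadamard ih using 1
    ext i j
    simp [pow_succ']

lemma PosSemidef.map_exp {B : Matrix ι ι ℂ} (hB : B.PosSemidef) :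
    (B.map Complex.exp).PosSemidef := by
  refine .of_dotProduct_mulVec_nonneg ?_ fun c => ?_
  · ext i j
    simp only [conjTranspose_apply, map_apply, Complex.star_def, ← Complex.exp_conj]
    exact congrArg _ (hB.isHermitian.apply i j)
  · have hmat : HasSum (fun k : ℕ => (k.factorial⁻¹ : ℝ) • B.map (· ^ k))
        (B.map Complex.exp) := by
      refine Pi.hasSum.mpr fun i => Pi.hasSum.mpr fun j => ?_
      simpa [Complex.exp_eq_exp_ℂ] using NormedSpace.exp_series_hasSum_exp' (𝕂 := ℝ) (B i j)
    let Q : Matrix ι ι ℂ →L[ℝ] ℂ := LinearMap.toContinuousLinearMap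
      { toFun := fun M => star c ⬝ᵥ M *ᵥ c
        map_add' := by simp [add_mulVec]
        map_smul' := by simp [smul_mulVec] }
    refine (hmat.mapL Q).nonneg fun k => ?_
    simp only [Q, LinearMap.coe_toContinuousLinearMap', LinearMap.coe_mk, AddHom.coe_mk,
      smul_mulVec, dotProduct_smul]
    exact smul_nonneg (by positivity) ((hB.map_pow k).dotProduct_mulVec_nonneg c)

lemma PosSemidef.sum_dotProduct_smul_mulVec_nonneg {A : Matrix ι ι 𝕜} {P : Matrix κ κ 𝕜}
    (hA : A.PosSemidef) (hP : P.PosSemidef) (c : ι → κ → 𝕜) :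
    0 ≤ ∑ p, ∑ q, star (c p) ⬝ᵥ (A p q • P) *ᵥ c q := by
  convert (hA.kronecker hP).dotProduct_mulVec_nonneg (Function.uncurry c) using 1
  simp [dotProduct, mulVec, Fintype.sum_prod_type, Finset.mul_sum, mul_assoc, mul_left_comm]
  exact Finset.sum_congr rfl fun _ _ => Finset.sum_comm

lemma IsHermitian.posSemidef_exp [DecidableEq ι] {S : Matrix ι ι 𝕜} (hS : S.IsHermitian) :
    (NormedSpace.exp S).PosSemidef := by
  have hH : (NormedSpace.exp ((1 / 2 : ℝ) • S)).IsHermitian :=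
    (hS.smul (IsSelfAdjoint.all _)).exp
  have hS_half : S = (2 : ℕ) • ((1 / 2 : ℝ) • S) := by
    rw [two_smul, ← add_smul]; norm_num
  rw [hS_half, exp_nsmul, sq]
  nth_rewrite 1 [← hH.eq]
  exact posSemidef_conjTranspose_mul_self _

lemma exp_smul_one_add [DecidableEq ι] (z : ℂ) (S : Matrix ι ι ℂ) :
    NormedSpace.exp (z • 1 + S) = Complex.exp z • NormedSpace.exp S := by
  rw [exp_add_of_commute _ _ ((Commute.one_left S).smul_left z), smul_one_eq_diagonal,
    exp_diagonal, Pi.exp_def, ← Complex.exp_eq_exp_ℂ]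
  simp [smul_eq_diagonal_mul]

end Matrix

open Matrix ComplexConjugate

namespace IsCondPosSemidefFun

variable {n : ℕ} {F : (Fin n → ℝ) → ℂ}

lemma apply_neg (hF : IsCondPosSemidefFun F) (y : Fin n → ℝ) : F (-y) = conj (F y) := by
  have h := congrFun (congrFun (hF 2 ![y, 0]).1 0) 1
  simp only [conjTranspose_apply, of_apply, cons_val_zero, cons_val_one, cons_val_fin_one,
    zero_sub, sub_zero] at h
  rw [← h, Complex.star_def, Complex.conj_conj]

lemma const_mul (hF : IsCondPosSemidefFun F) {t : ℝ} (ht : 0 ≤ t) :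
    IsCondPosSemidefFun fun x => (t : ℂ) * F x := by
  intro N x
  obtain ⟨hH, hQ⟩ := hF N x
  refine ⟨?_, fun c hc => ?_⟩
  · convert hH.smul (k := (t : ℂ)) (Complex.conj_ofReal t) using 1
    ext p q
    simp
  · have := mul_nonneg (Complex.zero_le_real.mpr ht) (hQ c hc)
    simpa [Finset.mul_sum, mul_assoc, mul_left_comm] using this

lemma dotProduct_mulVec_nonneg (hF : IsCondPosSemidefFun F) {N : ℕ} (x : Fin N → Fin n → ℝ)
    {c : Fin N → ℂ} (hc : ∑ p, c p = 0) :
    0 ≤ star c ⬝ᵥ (of fun p q => F (x p - x q)) *ᵥ c := by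
  simpa [dotProduct, mulVec, Finset.mul_sum, mul_assoc] using (hF N x).2 c hc

lemma posSemidef_centered (hF : IsCondPosSemidefFun F) {N : ℕ} (x : Fin N → Fin n → ℝ) :
    (of fun p q => F (x p - x q) - F (x p) - F (-x q) + F 0).PosSemidef := by
  -- `E c = (-∑ c, c)` has sum zero, so `Eᴴ A E` inherits the conditional inequality of `A`.
  let y : Fin (N + 1) → Fin n → ℝ := Fin.cons 0 x
  let A : Matrix (Fin (N + 1)) (Fin (N + 1)) ℂ := of fun r s => F (y r - y s)
  let E : Matrix (Fin (N + 1)) (Fin N) ℂ :=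
    of fun r q => Fin.cases (-1) (fun r' => (1 : Matrix (Fin N) (Fin N) ℂ) r' q) r
  have hB : (of fun p q => F (x p - x q) - F (x p) - F (-x q) + F 0) = Eᴴ * A * E := by
    ext p q
    simp [A, E, y, mul_apply, Fin.sum_univ_succ, one_apply]
    ring
  rw [hB]
  refine .of_dotProduct_mulVec_nonneg (isHermitian_conjTranspose_mul_mul E (hF (N + 1) y).1)
    fun c => ?_
  have hEc : ∑ r, (E *ᵥ c) r = 0 := by
    simp [E, Fin.sum_univ_succ, mulVec, dotProduct, one_apply]
  simpa only [star_mulVec, dotProduct_mulVec, vecMul_vecMul] using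
    hF.dotProduct_mulVec_nonneg y hEc

theorem isPosSemidefFun_exp (hF : IsCondPosSemidefFun F) :
    IsPosSemidefFun fun x => Complex.exp (F x) := by
  intro N x
  have hF0 : conj (F 0) = F 0 := by simpa using (hF.apply_neg 0).symm
  let g : Fin N → ℂ := fun p => Complex.exp (F (x p) - F 0 / 2)
  convert (hF.posSemidef_centered x).map_exp.mul_mul_conjTranspose_same (diagonal g) using 1
  ext p q
  simp [g, diagonal_mul, mul_diagonal, ← Complex.exp_conj, ← Complex.exp_add, hF.apply_neg, hF0,
    map_ofNat]
  congr 1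
  ring

end IsCondPosSemidefFun

theorem stmt14_general {n : ℕ}
    (a : (Fin n → ℝ) → ℝ)
    (b : ℝ)
    (F₀ : (Fin n → ℝ) → Matrix (Fin 2) (Fin 2) ℂ)
    (hF₀ : ∀ x, F₀ x = !![(a x : ℂ), (b : ℂ); (b : ℂ), (a x : ℂ)])
    (ha : IsCondPosSemidefFun fun x => (a x : ℂ)) :
    ∀ t : ℝ, 0 < t →
      ∀ (N : ℕ) (x : Fin N → (Fin n → ℝ)) (c : Fin N → Fin 2 → ℂ),
        0 ≤ ∑ p, ∑ q, dotProduct (star (c p))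
          ((NormedSpace.exp ((t : ℂ) • F₀ (x p - x q))).mulVec (c q)) := by
  intro t ht N x c
  let S : Matrix (Fin 2) (Fin 2) ℂ := !![0, (t * b : ℂ); (t * b : ℂ), 0]
  have hS : S.IsHermitian := by
    ext i j
    fin_cases i <;> fin_cases j <;> simp [S]
  have hsplit : ∀ y, (t : ℂ) • F₀ y = ((t : ℂ) * a y) • 1 + S := by
    intro y
    ext i j
    fin_cases i <;> fin_cases j <;> simp [S, hF₀]
  have hA := (ha.const_mul ht.le).isPosSemidefFun_exp N x
  simp only [hsplit, exp_smul_one_add]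
  exact hA.sum_dotProduct_smul_mulVec_nonneg hS.posSemidef_exp c

theorem stmt14 {n : ℕ} (hn : 1 ≤ n)
    (a : (Fin n → ℝ) → ℝ) (ha_cont : Continuous a) (ha_bdd : ∃ c : ℝ, ∀ x, a x ≤ c)
    (b : ℝ) (hb : 0 ≤ b)
    (F₀ : (Fin n → ℝ) → Matrix (Fin 2) (Fin 2) ℂ)
    (hF₀ : ∀ x, F₀ x = !![(a x : ℂ), (b : ℂ); (b : ℂ), (a x : ℂ)])
    (ha : IsCondPosSemidefFun fun x => (a x : ℂ)) :
    ∀ t : ℝ, 0 < t →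
      ∀ (N : ℕ) (x : Fin N → (Fin n → ℝ)) (c : Fin N → Fin 2 → ℂ),
        0 ≤ ∑ p, ∑ q, dotProduct (star (c p))
          ((NormedSpace.exp ((t : ℂ) • F₀ (x p - x q))).mulVec (c q)) :=
  stmt14_general a b F₀ hF₀ ha
end
end

section
/- Let n ∈ ℕ, n ≥ 1, let a : ℝⁿ → ℝ be continuous and bounded above, let b ≥ 0 be a constant, and define F₀ : ℝⁿ → ℂ^{2×2} by F₀(x) = [[a(x), b],[b, a(x)]]. Suppose that for every t > 0 the matrix-valued function x ↦ exp(t F₀(x)) (matrix exponential) is positive semidefinite in the block sense. Then F₀ is conditionally positive semidefinite in the sense of Mlak: for all N ∈ ℕ, all x₁,…,x_N ∈ ℝⁿ, and all c₁,…,c_N ∈ ℂ² with Σ_{p=1}^N c_p = 0, one has Σ_{p,q=1}^N ⟨c_p, F₀(x_p − x_q) c_q⟩_{ℂ²} ≥ 0. -/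
/-!
For a fixed configuration `x₁, …, x_N` and coefficients `c` with `∑ c_p = 0`, the function
`t ↦ ∑ ⟨c_p, exp(t F₀(x_p - x_q)) c_q⟩` vanishes at `t = 0` (there `exp = 1` and the form is
`|∑ c_p|²`) and is nonnegative for `t > 0`, so its right derivative at `0`, which is
`∑ ⟨c_p, F₀(x_p - x_q) c_q⟩`, is nonnegative.
-/

open MeasureTheory Complex
open scoped ComplexOrder ENNReal

noncomputable section

open Set Matrix

theorem nonneg_of_hasDerivWithinAt_Ioi {E : Type*} [NormedAddCommGroup E] [NormedSpace ℝ E]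
    [PartialOrder E] [ClosedIciTopology E] [IsOrderedAddMonoid E] [PosSMulMono ℝ E]
    {g : ℝ → E} {L : E} {x : ℝ}
    (hg : HasDerivWithinAt g L (Ioi x) x) (hle : ∀ t > x, g x ≤ g t) : 0 ≤ L := by
  refine ge_of_tendsto ((hasDerivWithinAt_iff_tendsto_slope' (s := Ioi x) (lt_irrefl x)).mp hg) ?_
  filter_upwards [self_mem_nhdsWithin] with t (ht : x < t)
  exact smul_nonneg (inv_nonneg.mpr (sub_nonneg.mpr ht.le)) (sub_nonneg.mpr (hle t ht))

section BlockQuadForm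

variable {ι m : Type*} [Fintype ι] [Fintype m] [DecidableEq m]

-- Matrices carry no global norm; any one will do for differentiating `exp`.
attribute [local instance] Matrix.linftyOpNormedRing Matrix.linftyOpNormedAlgebra

theorem Matrix.hasDerivAt_exp_ofReal_smul_zero (M : Matrix m m ℂ) :
    HasDerivAt (fun t : ℝ => NormedSpace.exp ((t : ℂ) • M)) M 0 := by
  have h := hasDerivAt_exp_smul_const (𝕂 := ℝ) M 0
  rw [zero_smul, NormedSpace.exp_zero, one_mul] at h
  simp only [Complex.coe_smul]
  exact h

def blockQuadForm (K : ι → ι → Matrix m m ℂ) (c : ι → m → ℂ) : ℂ :=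
  ∑ p, ∑ q, star (c p) ⬝ᵥ (K p q *ᵥ c q)

theorem blockQuadForm_one (c : ι → m → ℂ) :
    blockQuadForm (fun _ _ => 1) c = star (∑ p, c p) ⬝ᵥ ∑ q, c q := by
  simp only [blockQuadForm, one_mulVec, star_sum, sum_dotProduct, dotProduct_sum]
  exact Finset.sum_comm

theorem hasDerivAt_blockQuadForm_exp_ofReal_smul_zero (K : ι → ι → Matrix m m ℂ)
    (c : ι → m → ℂ) :
    HasDerivAt (fun t : ℝ => blockQuadForm (fun p q => NormedSpace.exp ((t : ℂ) • K p q)) c)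
      (blockQuadForm K c) 0 := by
  refine HasDerivAt.fun_sum fun p _ => HasDerivAt.fun_sum fun q _ => ?_
  let ℓ : Matrix m m ℂ →L[ℂ] ℂ := LinearMap.toContinuousLinearMap
    { toFun := fun M => star (c p) ⬝ᵥ (M *ᵥ c q)
      map_add' := fun M N => by simp [add_mulVec, dotProduct_add]
      map_smul' := fun z M => by simp [smul_mulVec, dotProduct_smul] }
  exact (ℓ.restrictScalars ℝ).hasFDerivAt.comp_hasDerivAt (0 : ℝ)
    (hasDerivAt_exp_ofReal_smul_zero (K p q))

theorem blockQuadForm_nonneg_of_exp_smul (K : ι → ι → Matrix m m ℂ) {c : ι → m → ℂ}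
    (hc : ∑ p, c p = 0)
    (hexp : ∀ t : ℝ, 0 < t →
      0 ≤ blockQuadForm (fun p q => NormedSpace.exp ((t : ℂ) • K p q)) c) :
    0 ≤ blockQuadForm K c := by
  have h_zero : blockQuadForm (fun p q => NormedSpace.exp (((0 : ℝ) : ℂ) • K p q)) c = 0 := by
    simp only [ofReal_zero, zero_smul, NormedSpace.exp_zero, blockQuadForm_one, hc,
      dotProduct_zero]
  refine nonneg_of_hasDerivWithinAt_Ioi
    (hasDerivAt_blockQuadForm_exp_ofReal_smul_zero K c).hasDerivWithinAt fun t ht => ?_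
  rw [h_zero]
  exact hexp t ht

end BlockQuadForm

theorem stmt15_general {n : ℕ}
    (F₀ : (Fin n → ℝ) → Matrix (Fin 2) (Fin 2) ℂ)
    (hexp : ∀ t : ℝ, 0 < t →
      ∀ (N : ℕ) (x : Fin N → (Fin n → ℝ)) (c : Fin N → Fin 2 → ℂ),
        0 ≤ ∑ p, ∑ q, dotProduct (star (c p))
          ((NormedSpace.exp ((t : ℂ) • F₀ (x p - x q))).mulVec (c q))) :
    ∀ (N : ℕ) (x : Fin N → (Fin n → ℝ)) (c : Fin N → Fin 2 → ℂ),
      (∑ p, c p) = 0 →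
      0 ≤ ∑ p, ∑ q,
        dotProduct (star (c p)) ((F₀ (x p - x q)).mulVec (c q)) :=
  fun N x c hc => blockQuadForm_nonneg_of_exp_smul (fun p q => F₀ (x p - x q)) hc
    fun t ht => hexp t ht N x c

theorem stmt15 {n : ℕ} (hn : 1 ≤ n)
    (a : (Fin n → ℝ) → ℝ) (ha_cont : Continuous a) (ha_bdd : ∃ c : ℝ, ∀ x, a x ≤ c)
    (b : ℝ) (hb : 0 ≤ b)
    (F₀ : (Fin n → ℝ) → Matrix (Fin 2) (Fin 2) ℂ)
    (hF₀ : ∀ x, F₀ x = !![(a x : ℂ), (b : ℂ); (b : ℂ), (a x : ℂ)])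
    (hexp : ∀ t : ℝ, 0 < t →
      ∀ (N : ℕ) (x : Fin N → (Fin n → ℝ)) (c : Fin N → Fin 2 → ℂ),
        0 ≤ ∑ p, ∑ q, dotProduct (star (c p))
          ((NormedSpace.exp ((t : ℂ) • F₀ (x p - x q))).mulVec (c q))) :
    ∀ (N : ℕ) (x : Fin N → (Fin n → ℝ)) (c : Fin N → Fin 2 → ℂ),
      (∑ p, c p) = 0 →
      0 ≤ ∑ p, ∑ q,
        dotProduct (star (c p)) ((F₀ (x p - x q)).mulVec (c q)) :=
  stmt15_general F₀ hexp
end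
end
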